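/- arXiv:2301.02320 — 10 statements merged into one kernel-verified Lean document; each statement's English description precedes it below -/
import Mathlib

section
/- Let α, β, γ ∈ ℂ with |γ| = 1 and |β| ≥ η > 0, and suppose z₁, z₂ are the roots of γ z² + β z + α. If |α| ≤ δ where δ > 0 satisfies 2δ/η ≤ ε and 2δ/η < η/2, then the two roots have different absolute values and the root of smaller absolute value has modulus at most ε. -/
/-! Vieta gives `‖z₁‖ + ‖z₂‖ ≥ ‖β‖ ≥ η` and `‖z₁‖ ‖z₂‖ = ‖α‖ ≤ δ`. So the larger modulus is at
least `η / 2`, and the smaller one is at most `δ / (η / 2) = 2δ / η`, which is below `η / 2`. -/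

section MinMax

variable {K : Type*} [Field K] [LinearOrder K] [IsStrictOrderedRing K] {a b s p : K}

lemma half_le_max_of_le_add (h : s ≤ a + b) : s / 2 ≤ max a b := by
  linarith [le_max_left a b, le_max_right a b]

lemma min_le_two_mul_div_of_le_add_of_mul_le (ha : 0 ≤ a) (hb : 0 ≤ b) (hs : 0 < s)
    (hsum : s ≤ a + b) (hprod : a * b ≤ p) : min a b ≤ 2 * p / s := by
  have hmax := half_le_max_of_le_add hsum
  have hmin : 0 ≤ min a b := le_min ha hb
  rw [le_div_iff₀ hs]
  calc min a b * s = 2 * (min a b * (s / 2)) := by ring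
    _ ≤ 2 * (min a b * max a b) := by gcongr
    _ = 2 * (a * b) := by rw [min_mul_max]
    _ ≤ 2 * p := by gcongr

end MinMax

theorem stmt_2_general (α β γ z₁ z₂ : ℂ) (η ε δ : ℝ) (hη : 0 < η)
    (hγ : ‖γ‖ = 1)
    (hβ : η ≤ ‖β‖)
    (hVieta1 : γ * (z₁ + z₂) = -β)
    (hVieta2 : γ * z₁ * z₂ = α)
    (hα : ‖α‖ ≤ δ)
    (h1 : 2 * δ / η ≤ ε) (h2 : 2 * δ / η < η / 2) :
    ‖z₁‖ ≠ ‖z₂‖ ∧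
      min (‖z₁‖) (‖z₂‖) ≤ ε := by
  have hsum : η ≤ ‖z₁‖ + ‖z₂‖ :=
    calc η ≤ ‖β‖ := hβ
      _ = ‖z₁ + z₂‖ := by rw [← norm_neg, ← hVieta1, norm_mul, hγ, one_mul]
      _ ≤ ‖z₁‖ + ‖z₂‖ := norm_add_le _ _
  have hprod : ‖z₁‖ * ‖z₂‖ ≤ δ := by
    rwa [← hVieta2, norm_mul, norm_mul, hγ, one_mul] at hα
  have hmin := min_le_two_mul_div_of_le_add_of_mul_le (norm_nonneg _) (norm_nonneg _) hη hsum hprod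
  have hmax := half_le_max_of_le_add hsum
  exact ⟨min_lt_max.mp (by linarith), hmin.trans h1⟩

/-- If `|γ| = 1`, `|β| ≥ η > 0`, `z₁, z₂` are the roots of `γ z² + β z + α` (via Vieta),
`|α| ≤ δ` where `δ > 0` satisfies `2δ/η ≤ ε` and `2δ/η < η/2`, then the roots have
different absolute values and the smaller root has modulus at most `ε`. -/
theorem stmt_2 (α β γ z₁ z₂ : ℂ) (η ε δ : ℝ) (hη : 0 < η) (hε : 0 < ε) (hδ : 0 < δ)
    (hγ : ‖γ‖ = 1)
    (hβ : η ≤ ‖β‖)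
    (hVieta1 : γ * (z₁ + z₂) = -β)
    (hVieta2 : γ * z₁ * z₂ = α)
    (hα : ‖α‖ ≤ δ)
    (h1 : 2 * δ / η ≤ ε) (h2 : 2 * δ / η < η / 2) :
    ‖z₁‖ ≠ ‖z₂‖ ∧
      min (‖z₁‖) (‖z₂‖) ≤ ε :=
  stmt_2_general α β γ z₁ z₂ η ε δ hη hγ hβ hVieta1 hVieta2 hα h1 h2
end

section
/- Let I₁,…,I_k be open subintervals of [a₀,b₀] with pairwise disjoint closures, and let φ : [a₀,b₀] \ (I₁ ∪ … ∪ I_k) → 𝕋 be continuous with values in the unit circle 𝕋 ⊆ ℂ. Then φ extends to a continuous function ψ : [a₀,b₀] → 𝕋. -/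
/-!
On each gap `[aᵢ, bᵢ]` the endpoint values `φ aᵢ` and `φ bᵢ` lie on the unit circle, so they are
joined by the circular arc `s ↦ φ aᵢ · exp (i s θ)`, `θ = arg (φ bᵢ / φ aᵢ)`, reparametrised over
`[aᵢ, bᵢ]`. Filling every gap with its arc extends `φ`; the result is continuous by the pasting lemma
for the finitely many closed pieces `[a₀, b₀] \ ⋃ⱼ Iⱼ` and `closure Iᵢ`, which agree where they meet
because the frontier of an open `Iᵢ` misses every `Iⱼ`.
-/

open Set Complex Function

noncomputable def circleArc (z w : ℂ) (s : ℝ) : ℂ :=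
  z * exp (↑((w / z).arg * s) * I)

section CircleArc

variable (z w : ℂ)

@[fun_prop]
theorem continuous_circleArc : Continuous (circleArc z w) := by
  unfold circleArc
  fun_prop

theorem norm_circleArc (s : ℝ) : ‖circleArc z w s‖ = ‖z‖ := by
  rw [circleArc, norm_mul, norm_exp_ofReal_mul_I, mul_one]

theorem circleArc_zero : circleArc z w 0 = z := by
  simp [circleArc]

variable {z w} in
theorem circleArc_one (h : ‖z‖ = ‖w‖) : circleArc z w 1 = w := by
  rcases eq_or_ne z 0 with rfl | hz
  · simpa [circleArc, eq_comm] using h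
  have hwz : ‖w / z‖ = 1 := by
    rw [norm_div, h, div_self (h ▸ norm_ne_zero_iff.2 hz)]
  have := norm_mul_exp_arg_mul_I (w / z)
  rw [hwz, ofReal_one, one_mul] at this
  rw [circleArc, mul_one, this, mul_div_cancel₀ _ hz]

end CircleArc

theorem eqOn_frontier_Ioo_circleArc {φ : ℝ → ℂ} {a b : ℝ}
    (h : ∀ t ∈ frontier (Ioo a b), ‖φ t‖ = 1) :
    EqOn (fun t ↦ circleArc (φ a) (φ b) ((t - a) / (b - a))) φ (frontier (Ioo a b)) := by
  rcases lt_or_ge a b with hab | hba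
  · rw [frontier_Ioo hab] at h ⊢
    have hnorm : ‖φ a‖ = ‖φ b‖ := (h a (by simp)).trans (h b (by simp)).symm
    rintro t (rfl | rfl)
    · simp [circleArc_zero]
    · simp [div_self (sub_ne_zero.2 hab.ne'), circleArc_one hnorm]
  · simp [Ioo_eq_empty_of_le hba]

section Glue

variable {X Y ι : Type*} {U : ι → Set X} {f : X → Y} {g : ι → X → Y}

open Classical in
noncomputable def glue (U : ι → Set X) (f : X → Y) (g : ι → X → Y) (x : X) : Y :=
  if h : ∃ i, x ∈ U i then g h.choose x else f x

theorem glue_of_mem (hU : Pairwise (Disjoint on U)) {i : ι} {x : X} (hx : x ∈ U i) :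
    glue U f g x = g i x := by
  have h : ∃ j, x ∈ U j := ⟨i, hx⟩
  obtain rfl : h.choose = i := hU.eq (not_disjoint_iff.2 ⟨x, h.choose_spec, hx⟩)
  exact dif_pos h

theorem glue_of_notMem {x : X} (hx : x ∉ ⋃ i, U i) : glue U f g x = f x :=
  dif_neg (by simpa using hx)

variable [TopologicalSpace X] [TopologicalSpace Y]

theorem disjoint_frontier_iUnion (hUo : ∀ i, IsOpen (U i)) (hU : Pairwise (Disjoint on U))
    (i : ι) : Disjoint (frontier (U i)) (⋃ j, U j) := by
  refine disjoint_iUnion_right.2 fun j ↦ ?_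
  rcases eq_or_ne i j with rfl | hij
  · exact disjoint_frontier_iff_isOpen.2 (hUo i)
  · exact ((hU hij).closure_left (hUo j)).mono_left frontier_subset_closure

theorem frontier_subset_diff_iUnion {A : Set X} (hUo : ∀ i, IsOpen (U i))
    (hU : Pairwise (Disjoint on U)) {i : ι} (hUA : closure (U i) ⊆ A) :
    frontier (U i) ⊆ A \ ⋃ j, U j := fun _ hx ↦
  ⟨hUA (frontier_subset_closure hx), disjoint_left.1 (disjoint_frontier_iUnion hUo hU i) hx⟩

theorem continuousOn_glue [Finite ι] {A : Set X} (hA : IsClosed A) (hUo : ∀ i, IsOpen (U i))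
    (hU : Pairwise (Disjoint on U)) (hf : ContinuousOn f (A \ ⋃ i, U i))
    (hg : ∀ i, ContinuousOn (g i) (closure (U i))) (hgf : ∀ i, EqOn (g i) f (frontier (U i))) :
    ContinuousOn (glue U f g) A := by
  have hcover : A ⊆ (A \ ⋃ i, U i) ∪ ⋃ i, closure (U i) := fun x hx ↦
    (em (x ∈ ⋃ i, U i)).elim (fun h ↦ Or.inr (iUnion_mono (fun _ ↦ subset_closure) h))
      fun h ↦ Or.inl ⟨hx, h⟩
  refine ContinuousOn.mono ?_ hcover
  refine .union_of_isClosed ?_ ?_ (hA.sdiff (isOpen_iUnion hUo))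
    (isClosed_iUnion_of_finite fun _ ↦ isClosed_closure)
  · exact hf.congr fun x hx ↦ glue_of_notMem hx.2
  refine (locallyFinite_of_finite _).continuousOn_iUnion (fun _ ↦ isClosed_closure) fun i ↦
    (hg i).congr fun x hx ↦ ?_
  by_cases hxi : x ∈ U i
  · exact glue_of_mem hU hxi
  · have hfr : x ∈ frontier (U i) := ⟨hx, by rwa [(hUo i).interior_eq]⟩
    rw [glue_of_notMem (disjoint_left.1 (disjoint_frontier_iUnion hUo hU i) hfr), hgf i hfr]

end Glue

theorem stmt_4_general (a₀ b₀ : ℝ) (k : ℕ) (a b : Fin k → ℝ)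
    (hsub : ∀ i, Set.Ioo (a i) (b i) ⊆ Set.Icc a₀ b₀)
    (hdisj : Pairwise fun i j => Disjoint (Set.Icc (a i) (b i)) (Set.Icc (a j) (b j)))
    (φ : ℝ → ℂ)
    (hφcont : ContinuousOn φ (Set.Icc a₀ b₀ \ ⋃ i, Set.Ioo (a i) (b i)))
    (hφcirc : ∀ t ∈ Set.Icc a₀ b₀ \ ⋃ i, Set.Ioo (a i) (b i), ‖φ t‖ = 1) :
    ∃ ψ : ℝ → ℂ, ContinuousOn ψ (Set.Icc a₀ b₀) ∧
      (∀ t ∈ Set.Icc a₀ b₀, ‖ψ t‖ = 1) ∧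
      (∀ t ∈ Set.Icc a₀ b₀ \ ⋃ i, Set.Ioo (a i) (b i), ψ t = φ t) := by
  set U : Fin k → Set ℝ := fun i ↦ Ioo (a i) (b i)
  have hUo : ∀ i, IsOpen (U i) := fun _ ↦ isOpen_Ioo
  have hU : Pairwise (Disjoint on U) := fun i j hij ↦
    (hdisj hij).mono Ioo_subset_Icc_self Ioo_subset_Icc_self
  have hfr : ∀ i, frontier (U i) ⊆ Icc a₀ b₀ \ ⋃ j, U j := fun i ↦
    frontier_subset_diff_iUnion hUo hU (closure_minimal (hsub i) isClosed_Icc)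
  set g : Fin k → ℝ → ℂ := fun i t ↦ circleArc (φ (a i)) (φ (b i)) ((t - a i) / (b i - a i))
  refine ⟨glue U φ g, ?_, fun t ht ↦ ?_, fun t ht ↦ glue_of_notMem ht.2⟩
  · exact continuousOn_glue isClosed_Icc hUo hU hφcont (fun i ↦ by fun_prop)
      fun i ↦ eqOn_frontier_Ioo_circleArc fun t ht ↦ hφcirc t (hfr i ht)
  by_cases htU : t ∈ ⋃ i, U i
  · obtain ⟨i, hi⟩ := mem_iUnion.1 htU
    rw [glue_of_mem hU hi, norm_circleArc]
    have ha : a i ∈ frontier (Ioo (a i) (b i)) := by simp [frontier_Ioo (hi.1.trans hi.2)]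
    exact hφcirc _ (hfr i ha)
  · rw [glue_of_notMem htU]
    exact hφcirc t ⟨ht, htU⟩

/-- If `I₁,…,I_k` are open subintervals of `[a₀,b₀]` with pairwise disjoint closures, then any
continuous circle-valued function on `[a₀,b₀] \ (I₁ ∪ … ∪ I_k)` extends to a continuous
circle-valued function on `[a₀,b₀]`. -/
theorem stmt_4 (a₀ b₀ : ℝ) (hab : a₀ < b₀) (k : ℕ) (a b : Fin k → ℝ)
    (hsub : ∀ i, Set.Ioo (a i) (b i) ⊆ Set.Icc a₀ b₀)
    (hdisj : Pairwise fun i j => Disjoint (Set.Icc (a i) (b i)) (Set.Icc (a j) (b j)))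
    (φ : ℝ → ℂ)
    (hφcont : ContinuousOn φ (Set.Icc a₀ b₀ \ ⋃ i, Set.Ioo (a i) (b i)))
    (hφcirc : ∀ t ∈ Set.Icc a₀ b₀ \ ⋃ i, Set.Ioo (a i) (b i), ‖φ t‖ = 1) :
    ∃ ψ : ℝ → ℂ, ContinuousOn ψ (Set.Icc a₀ b₀) ∧
      (∀ t ∈ Set.Icc a₀ b₀, ‖ψ t‖ = 1) ∧
      (∀ t ∈ Set.Icc a₀ b₀ \ ⋃ i, Set.Ioo (a i) (b i), ψ t = φ t) :=
  stmt_4_general a₀ b₀ k a b hsub hdisj φ hφcont hφcirc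
end

section
/- Let ε > 0 and let ψ : [a,b] → ℂ be continuous with ‖ψ‖_∞ ≤ ε². Suppose Z_a, W_a, Ẑ ∈ ℂ satisfy Z_a W_a = ψ(a), |Z_a|, |W_a| ≤ ε, and Ẑ² = ψ(b). Then there exist continuous Z₁, Z₂ : [a,b] → ℂ with Z₁(a) = Z_a, Z₂(a) = W_a, Z₁(b) = Z₂(b) = Ẑ, and |Z₁(t)|, |Z₂(t)| ≤ ε and Z₁(t)Z₂(t) = ψ(t) for all t. -/
/-!
Choose `Z₁` first, in polar form: its modulus is `max ℓ √‖ψ‖` with `ℓ` interpolating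
`‖Z_a‖` and `‖Ẑ‖` linearly, its argument interpolates `arg Z_a` and `arg Ẑ` linearly.
Then `‖ψ‖ ≤ ‖Z₁‖² ≤ ε²`, so `Z₂ := ψ / Z₁` (with `ψ / 0 = 0`, correct because `ψ = 0` wherever
`Z₁ = 0`) satisfies `‖Z₂‖ ≤ ‖Z₁‖ ≤ ε`, and it is continuous
even where `Z₁` vanishes, because there it is squeezed by `‖Z₁‖ → 0`. Matching the boundary
value `Z₂ a = W_a` requires `‖ψ a‖ ≤ ‖Z_a‖²`, which holds after swapping `Z_a` and `W_a`
so that `‖W_a‖ ≤ ‖Z_a‖`.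
-/

open Set Filter Topology

section QuotientBySquareRoot

variable {𝕜 : Type*} [NormedField 𝕜] {p z : 𝕜}

theorem norm_div_le_of_norm_le_sq (h : ‖p‖ ≤ ‖z‖ ^ 2) : ‖p / z‖ ≤ ‖z‖ := by
  rw [norm_div]
  exact div_le_of_le_mul₀ (norm_nonneg z) (norm_nonneg z) (by rwa [← sq])

theorem eq_zero_of_norm_le_sq_of_eq_zero (h : ‖p‖ ≤ ‖z‖ ^ 2) (hz : z = 0) : p = 0 :=
  norm_le_zero_iff.mp (by simpa [hz] using h)

theorem mul_div_cancel_of_norm_le_sq (h : ‖p‖ ≤ ‖z‖ ^ 2) : z * (p / z) = p := by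
  rcases eq_or_ne z 0 with hz | hz
  · simp [hz, eq_zero_of_norm_le_sq_of_eq_zero h hz]
  · exact mul_div_cancel₀ p hz

theorem ContinuousOn.div_of_norm_le_sq {X : Type*} [TopologicalSpace X] {f g : X → 𝕜}
    {s : Set X} (hf : ContinuousOn f s) (hg : ContinuousOn g s)
    (h : ∀ x ∈ s, ‖f x‖ ≤ ‖g x‖ ^ 2) : ContinuousOn (f / g) s := by
  intro x hx
  rcases eq_or_ne (g x) 0 with hgx | hgx
  · have hgx' : Tendsto (fun y => ‖g y‖) (𝓝[s] x) (𝓝 0) := by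
      simpa [ContinuousWithinAt, hgx] using (hg x hx).norm
    rw [ContinuousWithinAt, Pi.div_apply, hgx, div_zero]
    exact squeeze_zero_norm'
      (eventually_nhdsWithin_of_forall fun y hy => norm_div_le_of_norm_le_sq (h y hy)) hgx'
  · exact (hf x hx).div (hg x hx) hgx

end QuotientBySquareRoot

theorem exists_continuous_interpolation {a b : ℝ} (hab : a < b) (x y : ℝ) :
    ∃ ℓ : ℝ → ℝ, Continuous ℓ ∧ ℓ a = x ∧ ℓ b = y ∧ ∀ t ∈ Icc a b, ℓ t ≤ max x y := by
  have hba : b - a ≠ 0 := (sub_pos.mpr hab).ne'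
  refine ⟨fun t => x + (t - a) / (b - a) * (y - x), by fun_prop, by simp,
    by simp [div_self hba], fun t ht => ?_⟩
  have hs₀ : 0 ≤ (t - a) / (b - a) := div_nonneg (sub_nonneg.mpr ht.1) (sub_pos.mpr hab).le
  have hs₁ : (t - a) / (b - a) ≤ 1 :=
    (div_le_one (sub_pos.mpr hab)).mpr (sub_le_sub_right ht.2 a)
  rcases le_total x y with hxy | hxy
  · rw [max_eq_right hxy]
    nlinarith
  · rw [max_eq_left hxy]
    nlinarith

theorem exists_continuousOn_norm_eq {s : Set ℝ} {a b : ℝ} (hab : a < b) {r : ℝ → ℝ}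
    (hr : ContinuousOn r s) (hr₀ : ∀ t ∈ s, 0 ≤ r t) {z w : ℂ} (hra : r a = ‖z‖)
    (hrb : r b = ‖w‖) :
    ∃ Z : ℝ → ℂ, ContinuousOn Z s ∧ Z a = z ∧ Z b = w ∧ ∀ t ∈ s, ‖Z t‖ = r t := by
  obtain ⟨φ, hφ, hφa, hφb, -⟩ := exists_continuous_interpolation hab z.arg w.arg
  refine ⟨fun t => r t * Complex.exp (φ t * Complex.I),
    (Complex.continuous_ofReal.comp_continuousOn hr).mul (by fun_prop), ?_, ?_, fun t ht => ?_⟩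
  · simp only [hra, hφa, Complex.norm_mul_exp_arg_mul_I]
  · simp only [hrb, hφb, Complex.norm_mul_exp_arg_mul_I]
  · rw [norm_mul, Complex.norm_exp_ofReal_mul_I, mul_one, Complex.norm_real, Real.norm_eq_abs,
      abs_of_nonneg (hr₀ t ht)]

theorem exists_continuousOn_norm_le_sq {E : Type*} [SeminormedAddCommGroup E] {a b ε : ℝ}
    (hab : a < b) {ψ : ℝ → E} (hψc : ContinuousOn ψ (Icc a b))
    (hψb : ∀ t ∈ Icc a b, ‖ψ t‖ ≤ ε ^ 2) {x y : ℝ} (hx₀ : 0 ≤ x) (hy₀ : 0 ≤ y)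
    (hxε : x ≤ ε) (hyε : y ≤ ε) (hxa : ‖ψ a‖ ≤ x ^ 2) (hyb : ‖ψ b‖ ≤ y ^ 2) :
    ∃ N : ℝ → ℝ, ContinuousOn N (Icc a b) ∧ N a = x ∧ N b = y ∧
      ∀ t ∈ Icc a b, 0 ≤ N t ∧ ‖ψ t‖ ≤ N t ^ 2 ∧ N t ≤ ε := by
  obtain ⟨ℓ, hℓ, hℓa, hℓb, hℓε⟩ := exists_continuous_interpolation hab x y
  have hε : 0 ≤ ε := hx₀.trans hxε
  refine ⟨fun t => max (ℓ t) √‖ψ t‖,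
    hℓ.continuousOn.sup (Real.continuous_sqrt.comp_continuousOn hψc.norm), ?_, ?_,
    fun t ht => ⟨(Real.sqrt_nonneg _).trans (le_max_right _ _), ?_, ?_⟩⟩
  · simp only [hℓa, max_eq_left ((Real.sqrt_le_left hx₀).mpr hxa)]
  · simp only [hℓb, max_eq_left ((Real.sqrt_le_left hy₀).mpr hyb)]
  · exact (Real.sqrt_le_iff.mp (le_max_right _ _)).2
  · exact max_le ((hℓε t ht).trans (max_le hxε hyε)) ((Real.sqrt_le_left hε).mpr (hψb t ht))

theorem exists_factorization_of_norm_le_norm {a b ε : ℝ} (hab : a < b) {ψ : ℝ → ℂ}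
    (hψc : ContinuousOn ψ (Icc a b)) (hψb : ∀ t ∈ Icc a b, ‖ψ t‖ ≤ ε ^ 2) {Za Wa Zhat : ℂ}
    (hfa : Za * Wa = ψ a) (hZa : ‖Za‖ ≤ ε) (hWa : ‖Wa‖ ≤ ‖Za‖) (hZhat : Zhat ^ 2 = ψ b) :
    ∃ Z₁ Z₂ : ℝ → ℂ, ContinuousOn Z₁ (Icc a b) ∧ ContinuousOn Z₂ (Icc a b) ∧
      Z₁ a = Za ∧ Z₂ a = Wa ∧ Z₁ b = Zhat ∧ Z₂ b = Zhat ∧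
      ∀ t ∈ Icc a b, ‖Z₁ t‖ ≤ ε ∧ ‖Z₂ t‖ ≤ ε ∧ Z₁ t * Z₂ t = ψ t := by
  have hψa : ‖ψ a‖ ≤ ‖Za‖ ^ 2 := by
    rw [← hfa, norm_mul, sq]
    exact mul_le_mul_of_nonneg_left hWa (norm_nonneg Za)
  have hψb' : ‖ψ b‖ = ‖Zhat‖ ^ 2 := by rw [← hZhat, norm_pow]
  have hZhatε : ‖Zhat‖ ≤ ε := by
    refine (pow_le_pow_iff_left₀ (norm_nonneg _) ((norm_nonneg Za).trans hZa) two_ne_zero).mp ?_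
    exact hψb' ▸ hψb b (right_mem_Icc.mpr hab.le)
  obtain ⟨N, hNc, hNa, hNb, hN⟩ := exists_continuousOn_norm_le_sq hab hψc hψb (norm_nonneg Za)
    (norm_nonneg Zhat) hZa hZhatε hψa hψb'.le
  obtain ⟨Z₁, hZ₁c, hZ₁a, hZ₁b, hZ₁N⟩ := exists_continuousOn_norm_eq hab hNc
    (fun t ht => (hN t ht).1) hNa hNb
  have hψZ₁ : ∀ t ∈ Icc a b, ‖ψ t‖ ≤ ‖Z₁ t‖ ^ 2 := fun t ht => hZ₁N t ht ▸ (hN t ht).2.1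
  refine ⟨Z₁, ψ / Z₁, hZ₁c, hψc.div_of_norm_le_sq hZ₁c hψZ₁, hZ₁a, ?_, hZ₁b, ?_,
    fun t ht => ⟨hZ₁N t ht ▸ (hN t ht).2.2, ?_, mul_div_cancel_of_norm_le_sq (hψZ₁ t ht)⟩⟩
  · rcases eq_or_ne Za 0 with h | h
    · simp [h, norm_le_zero_iff.mp (by simpa [h] using hWa), ← hfa]
    · simp [hZ₁a, ← hfa, h]
  · simp [hZ₁b, ← hZhat, sq]
  · exact (norm_div_le_of_norm_le_sq (hψZ₁ t ht)).trans (hZ₁N t ht ▸ (hN t ht).2.2)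

theorem stmt_6_general (a b : ℝ) (hab : a < b) (ε : ℝ) (ψ : ℝ → ℂ)
    (hψc : ContinuousOn ψ (Set.Icc a b))
    (hψb : ∀ t ∈ Set.Icc a b, ‖ψ t‖ ≤ ε ^ 2)
    (Za Wa Zhat : ℂ)
    (hfa : Za * Wa = ψ a) (hZa : ‖Za‖ ≤ ε) (hWa : ‖Wa‖ ≤ ε)
    (hZhat : Zhat ^ 2 = ψ b) :
    ∃ Z₁ Z₂ : ℝ → ℂ, ContinuousOn Z₁ (Set.Icc a b) ∧ ContinuousOn Z₂ (Set.Icc a b) ∧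
      Z₁ a = Za ∧ Z₂ a = Wa ∧ Z₁ b = Zhat ∧ Z₂ b = Zhat ∧
      (∀ t ∈ Set.Icc a b, ‖Z₁ t‖ ≤ ε ∧ ‖Z₂ t‖ ≤ ε ∧
        Z₁ t * Z₂ t = ψ t) := by
  rcases le_total ‖Wa‖ ‖Za‖ with h | h
  · exact exists_factorization_of_norm_le_norm hab hψc hψb hfa hZa h hZhat
  · obtain ⟨Z₁, Z₂, hc₁, hc₂, ha₁, ha₂, hb₁, hb₂, hpt⟩ :=
      exists_factorization_of_norm_le_norm hab hψc hψb ((mul_comm Wa Za).trans hfa) hWa h hZhat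
    exact ⟨Z₂, Z₁, hc₂, hc₁, ha₂, ha₁, hb₂, hb₁, fun t ht =>
      ⟨(hpt t ht).2.1, (hpt t ht).1, (mul_comm _ _).trans (hpt t ht).2.2⟩⟩

/-- Factorisation with prescribed boundary data: endpoint factorisation `Z_a W_a = ψ(a)` and a
square root `Ẑ² = ψ(b)` extend to a continuous factorisation `Z₁ Z₂ = ψ` bounded by `ε`. -/
theorem stmt_6 (a b : ℝ) (hab : a < b) (ε : ℝ) (hε : 0 < ε) (ψ : ℝ → ℂ)
    (hψc : ContinuousOn ψ (Set.Icc a b))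
    (hψb : ∀ t ∈ Set.Icc a b, ‖ψ t‖ ≤ ε ^ 2)
    (Za Wa Zhat : ℂ)
    (hfa : Za * Wa = ψ a) (hZa : ‖Za‖ ≤ ε) (hWa : ‖Wa‖ ≤ ε)
    (hZhat : Zhat ^ 2 = ψ b) :
    ∃ Z₁ Z₂ : ℝ → ℂ, ContinuousOn Z₁ (Set.Icc a b) ∧ ContinuousOn Z₂ (Set.Icc a b) ∧
      Z₁ a = Za ∧ Z₂ a = Wa ∧ Z₁ b = Zhat ∧ Z₂ b = Zhat ∧
      (∀ t ∈ Set.Icc a b, ‖Z₁ t‖ ≤ ε ∧ ‖Z₂ t‖ ≤ ε ∧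
        Z₁ t * Z₂ t = ψ t) :=
  stmt_6_general a b hab ε ψ hψc hψb Za Wa Zhat hfa hZa hWa hZhat
end

section
/- Let X be a compact Hausdorff zero-dimensional space. Then the unital commutative C*-algebra C(X, ℂ) is approximable by jointly non-degenerate products: for all f, g ∈ C(X) and ε > 0 there exist f', g' ∈ C(X) with ‖f − f'‖_∞ < ε, ‖g − g'‖_∞ < ε, f·g = f'·g', and |f'|² + |g'|² invertible in C(X) (i.e., bounded below by a positive constant). -/
/-!
Where `|f|² + |g|²` is small, `f` and `g` may be replaced by the constant `δ` and by `f g / δ`: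
this preserves the product, moves `f` and `g` by `O(δ)` where both are `O(δ)`, and keeps `f'` at
modulus `δ`. Zero-dimensionality provides a clopen set `V` separating `{|f|² + |g|² ≤ δ²}` from
`{|f|² + |g|² ≥ 4δ²}`, so that the modification made on `V` alone is continuous, while off `V`
the pair is already bounded away from zero.
-/

open Set

namespace ContinuousMap

variable {X Y : Type*} [TopologicalSpace X] [TopologicalSpace Y] {V : Set X}

noncomputable def piecewiseOfIsClopen (hV : IsClopen V) (u v : C(X, Y)) : C(X, Y) where
  toFun := by classical exact V.piecewise u v
  continuous_toFun := by
    classical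
    exact u.continuous.piecewise (by simp [hV.frontier_eq]) v.continuous

section

variable (hV : IsClopen V) (u v : C(X, Y)) {x : X}

theorem piecewiseOfIsClopen_apply_of_mem (hx : x ∈ V) : piecewiseOfIsClopen hV u v x = u x := by
  classical
  exact piecewise_eq_of_mem V u v hx

theorem piecewiseOfIsClopen_apply_of_notMem (hx : x ∉ V) :
    piecewiseOfIsClopen hV u v x = v x := by
  classical
  exact piecewise_eq_of_notMem V u v hx

end

theorem norm_sub_piecewiseOfIsClopen_lt [CompactSpace X] {E : Type*} [NormedAddCommGroup E]
    (hV : IsClopen V) (u v : C(X, E)) {r : ℝ} (hr : 0 < r) (huv : ∀ x ∈ V, ‖v x - u x‖ < r) :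
    ‖v - piecewiseOfIsClopen hV u v‖ < r := by
  rw [norm_lt_iff _ hr]
  intro x
  by_cases hx : x ∈ V
  · simpa [piecewiseOfIsClopen_apply_of_mem hV u v hx] using huv x hx
  · simpa [piecewiseOfIsClopen_apply_of_notMem hV u v hx] using hr

end ContinuousMap

theorem norm_sub_mul_div_ofReal_lt {a b : ℂ} {δ : ℝ} (hδ : 0 < δ) (ha : ‖a‖ < 2 * δ)
    (hb : ‖b‖ < 2 * δ) : ‖b - a * b / δ‖ < 6 * δ := by
  have hδC : (δ : ℂ) ≠ 0 := by exact_mod_cast hδ.ne'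
  calc ‖b - a * b / δ‖ = ‖b‖ * ‖1 - a / δ‖ := by
        rw [← norm_mul]; congr 1; field_simp
    _ ≤ ‖b‖ * (1 + ‖a‖ / δ) := by
        gcongr
        calc ‖1 - a / δ‖ ≤ ‖(1 : ℂ)‖ + ‖a / δ‖ := norm_sub_le _ _
          _ = 1 + ‖a‖ / δ := by simp [abs_of_pos hδ]
    _ < 2 * δ * 3 := by
        gcongr
        rw [add_comm, ← lt_sub_iff_add_lt, div_lt_iff₀ hδ]
        linarith
    _ = 6 * δ := by ring

theorem exists_mul_eq_nondegenerate_of_isClopen {X : Type*} [TopologicalSpace X] [CompactSpace X]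
    {f g : C(X, ℂ)} {V : Set X} (hV : IsClopen V) {δ : ℝ} (hδ : 0 < δ)
    (hsmall : ∀ x ∈ V, ‖f x‖ < 2 * δ ∧ ‖g x‖ < 2 * δ)
    (hlarge : ∀ x ∉ V, δ ^ 2 < ‖f x‖ ^ 2 + ‖g x‖ ^ 2) :
    ∃ f' g' : C(X, ℂ), ‖f - f'‖ < 6 * δ ∧ ‖g - g'‖ < 6 * δ ∧ f * g = f' * g' ∧
      ∀ x, δ ^ 2 ≤ ‖f' x‖ ^ 2 + ‖g' x‖ ^ 2 := by
  open ContinuousMap in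
  refine ⟨piecewiseOfIsClopen hV (.const X δ) f, piecewiseOfIsClopen hV ((δ : ℂ)⁻¹ • (f * g)) g,
    ?_, ?_, ?_, fun x => ?_⟩
  · refine norm_sub_piecewiseOfIsClopen_lt hV _ _ (by positivity) fun x hx => ?_
    calc ‖f x - δ‖ ≤ ‖f x‖ + ‖(δ : ℂ)‖ := norm_sub_le _ _
      _ < 2 * δ + δ := by simpa [abs_of_pos hδ] using (hsmall x hx).1
      _ < 6 * δ := by linarith
  · refine norm_sub_piecewiseOfIsClopen_lt hV _ _ (by positivity) fun x hx => ?_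
    simpa [div_eq_inv_mul, mul_comm, mul_left_comm] using
      norm_sub_mul_div_ofReal_lt hδ (hsmall x hx).1 (hsmall x hx).2
  · ext x
    by_cases hx : x ∈ V
    · simp [piecewiseOfIsClopen_apply_of_mem _ _ _ hx, hδ.ne']
    · simp [piecewiseOfIsClopen_apply_of_notMem _ _ _ hx]
  · by_cases hx : x ∈ V
    · simp only [piecewiseOfIsClopen_apply_of_mem _ _ _ hx, const_apply, Complex.norm_real,
        Real.norm_of_nonneg hδ.le]
      exact le_add_of_nonneg_right (sq_nonneg _)
    · simpa only [piecewiseOfIsClopen_apply_of_notMem _ _ _ hx] using (hlarge x hx).le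

/-- For a zero-dimensional compact Hausdorff space `X`, the algebra `C(X, ℂ)` is approximable
by jointly non-degenerate products. -/
theorem stmt_10 (X : Type*) [TopologicalSpace X] [CompactSpace X] [T2Space X]
    [TotallyDisconnectedSpace X] :
    ∀ (f g : C(X, ℂ)) (ε : ℝ), 0 < ε →
      ∃ f' g' : C(X, ℂ), ‖f - f'‖ < ε ∧ ‖g - g'‖ < ε ∧ f * g = f' * g' ∧
        ∃ η : ℝ, 0 < η ∧ ∀ x : X,
          η ≤ (‖f' x‖) ^ 2 + (‖g' x‖) ^ 2 := by
  intro f g ε hε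
  obtain ⟨δ, hδ, rfl⟩ : ∃ δ : ℝ, 0 < δ ∧ 6 * δ = ε := ⟨ε / 6, by positivity, by ring⟩
  set φ : X → ℝ := fun x => ‖f x‖ ^ 2 + ‖g x‖ ^ 2
  have hφ : Continuous φ := by fun_prop
  obtain ⟨V, hV, hφV, hVφ⟩ := exists_clopen_of_closed_subset_open
    (isClosed_Iic.preimage hφ) (isOpen_Iio.preimage hφ)
    (fun x (hx : φ x ≤ δ ^ 2) => show φ x < (2 * δ) ^ 2 by nlinarith)
  have hsmall : ∀ x ∈ V, ‖f x‖ < 2 * δ ∧ ‖g x‖ < 2 * δ := fun x hx => by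
    have : φ x < (2 * δ) ^ 2 := hVφ hx
    exact ⟨lt_of_pow_lt_pow_left₀ 2 (by positivity) (by nlinarith [sq_nonneg ‖g x‖]),
      lt_of_pow_lt_pow_left₀ 2 (by positivity) (by nlinarith [sq_nonneg ‖f x‖])⟩
  obtain ⟨f', g', hf, hg, hfg, hη⟩ := exists_mul_eq_nondegenerate_of_isClopen hV hδ hsmall
    fun x hx => not_le.1 fun h => hx (hφV h)
  exact ⟨f', g', hf, hg, hfg, δ ^ 2, by positivity, hη⟩
end

section
/- Let X be a connected compact Hausdorff space with more than one point, e.g. X = [0,1]. Then C(X, ℂ) is not approximable by jointly non-degenerate products: there exist f, g ∈ C(X) and ε > 0 such that no jointly non-degenerate pair (f', g') with ‖f−f'‖, ‖g−g'‖ < ε satisfies f g = f' g'. -/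
/-!
If `f * g = 0` and `f', g'` have no common zero with `f' * g' = f * g`, then the zero sets of
`f'` and `g'` are complementary closed sets, so on a connected space one of `f'`, `g'` vanishes
identically. Choosing `f` and `g` with disjoint supports and `f a = g b = 1`, such an `f'` or `g'`
is at distance at least `1` from `f` or `g`.
-/

namespace ContinuousMap

variable {X : Type*} [TopologicalSpace X]

theorem eq_zero_or_eq_zero_of_mul_eq_zero [ConnectedSpace X] {R : Type*} [TopologicalSpace R]
    [T1Space R] [MulZeroClass R] [NoZeroDivisors R] [ContinuousMul R] {f g : C(X, R)}
    (h : f * g = 0) (hfg : ∀ x, f x ≠ 0 ∨ g x ≠ 0) : f = 0 ∨ g = 0 := by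
  have hmul (x : X) : f x * g x = 0 := DFunLike.congr_fun h x
  have hzero : {x | f x = 0} = {x | g x ≠ 0} := by
    ext x
    rcases hfg x with hf | hg
    · simpa [hf] using hmul x
    · simp [hg, (mul_eq_zero.1 (hmul x)).resolve_right hg]
  have hclopen : IsClopen {x | f x = 0} :=
    ⟨isClosed_singleton.preimage f.continuous,
      hzero ▸ isOpen_compl_singleton.preimage g.continuous⟩
  rcases isClopen_iff.1 hclopen with hempty | huniv
  · right
    ext x
    have hfx : f x ≠ 0 := fun hx => hempty.subset hx
    exact (mul_eq_zero.1 (hmul x)).resolve_left hfx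
  · left
    ext x
    exact huniv.symm.subset (Set.mem_univ x)

theorem exists_mul_eq_zero_apply_eq_one [NormalSpace X] [T1Space X] (𝕜 : Type*) [RCLike 𝕜]
    {a b : X} (hab : a ≠ b) : ∃ f g : C(X, 𝕜), f * g = 0 ∧ f a = 1 ∧ g b = 1 := by
  obtain ⟨u, hua, hub, -⟩ := exists_continuous_zero_one_of_isClosed isClosed_singleton
    isClosed_singleton (Set.disjoint_singleton.2 hab)
  have hua : u a = 0 := hua rfl
  have hub : u b = 1 := hub rfl
  refine ⟨⟨fun x => ((max (1 - 2 * u x) 0 : ℝ) : 𝕜), by fun_prop⟩,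
    ⟨fun x => ((max (2 * u x - 1) 0 : ℝ) : 𝕜), by fun_prop⟩, ?_, ?_, ?_⟩
  · ext x
    rcases le_total (u x) (1 / 2) with hx | hx
    · simp [show max (2 * u x - 1) 0 = 0 by simp; linarith]
    · simp [show max (1 - 2 * u x) 0 = 0 by simp; linarith]
  · norm_num [hua]
  · norm_num [hub]

end ContinuousMap

open ContinuousMap

/-- For a connected compact Hausdorff space with more than one point, `C(X, ℂ)` is *not*
approximable by jointly non-degenerate products. -/
theorem stmt_11 (X : Type*) [TopologicalSpace X] [CompactSpace X] [T2Space X]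
    [ConnectedSpace X] [Nontrivial X] :
    ∃ (f g : C(X, ℂ)) (ε : ℝ), 0 < ε ∧
      ∀ f' g' : C(X, ℂ), ‖f - f'‖ < ε → ‖g - g'‖ < ε → f * g = f' * g' →
        ¬ ∃ η : ℝ, 0 < η ∧ ∀ x : X,
            η ≤ (‖f' x‖) ^ 2 + (‖g' x‖) ^ 2 := by
  obtain ⟨a, b, hab⟩ := exists_pair_ne X
  obtain ⟨f, g, hfg, hfa, hgb⟩ := exists_mul_eq_zero_apply_eq_one ℂ hab
  refine ⟨f, g, 1, one_pos, fun f' g' hf hg hprod ⟨η, hη, hbound⟩ => ?_⟩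
  have hnondeg (x : X) : f' x ≠ 0 ∨ g' x ≠ 0 := by
    by_contra! hx
    simpa [hx.1, hx.2, hη.not_ge] using hbound x
  rcases eq_zero_or_eq_zero_of_mul_eq_zero (hprod ▸ hfg) hnondeg with rfl | rfl
  · exact (by simpa [hfa] using f.norm_coe_le_norm a : (1 : ℝ) ≤ ‖f‖).not_gt (by simpa using hf)
  · exact (by simpa [hgb] using g.norm_coe_le_norm b : (1 : ℝ) ≤ ‖g‖).not_gt (by simpa using hg)
end

section
/- Let i : A → B be a bounded algebra homomorphism between Banach algebras satisfying ‖ab‖_A ≤ D(‖a‖_A ‖i(b)‖_B + ‖i(a)‖_B ‖b‖_A) for all a,b ∈ A. Then the second adjoint i** : A** → B**, with both biduals equipped with the left (first) Arens product, satisfies ‖FG‖ ≤ D(‖F‖ ‖i**(G)‖ + ‖i**(F)‖ ‖G‖) for all F, G ∈ A**. -/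
/-!
By Hahn–Banach for the seminorm `(x, y) ↦ α‖x‖ + β‖y‖` on `E × F`, applied to `χ` transported
to the graph of `i`, a functional with `‖χ x‖ ≤ α‖x‖ + β‖i x‖` splits as `χ₁ + ξ ∘ i` with
`‖χ₁‖ ≤ α` and `‖ξ‖ ≤ β`; hence `‖H χ‖ ≤ α‖H‖ + β‖i** H‖` for every `H` in the bidual.
Applying this first to `G` and `a ↦ φ (b * a)`, then to `F` and `b ↦ G (φ · b)`, bounds
`(F □ G) φ = F (G ∘ φ)` directly, without approximating `F` and `G` by nets in `A`.
-/
open NormedSpace ContinuousLinearMap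
open scoped NNReal

section

variable {𝕜 E F : Type*} [RCLike 𝕜] [NormedAddCommGroup E] [NormedSpace 𝕜 E]
  [NormedAddCommGroup F] [NormedSpace 𝕜 F]

theorem StrongDual.exists_eq_add_comp_of_norm_le (i : E →L[𝕜] F) (χ : StrongDual 𝕜 E)
    (α β : ℝ≥0) (hχ : ∀ x, ‖χ x‖ ≤ α * ‖x‖ + β * ‖i x‖) :
    ∃ (χ₁ : StrongDual 𝕜 E) (ξ : StrongDual 𝕜 F),
      χ = χ₁ + ξ.comp i ∧ ‖χ₁‖ ≤ α ∧ ‖ξ‖ ≤ β := by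
  let p : Seminorm 𝕜 (E × F) :=
    α • (normSeminorm 𝕜 E).comp (LinearMap.fst 𝕜 E F) +
      β • (normSeminorm 𝕜 F).comp (LinearMap.snd 𝕜 E F)
  have hp : ∀ x, p x = α * ‖x.1‖ + β * ‖x.2‖ := fun x => rfl
  let S := LinearMap.range ((LinearMap.id : E →ₗ[𝕜] E).prod (i : E →ₗ[𝕜] F))
  obtain ⟨g, hgχ, hg⟩ := Module.Dual.exists_extension_of_le_seminorm S
    ((χ.toLinearMap ∘ₗ LinearMap.fst 𝕜 E F).domRestrict S) (p := p) (by
      rintro ⟨_, x, rfl⟩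
      simpa [hp] using hχ x)
  have hgE : ∀ x : E, ‖g (x, 0)‖ ≤ α * ‖x‖ := fun x => by simpa [hp] using hg (x, 0)
  have hgF : ∀ y : F, ‖g (0, y)‖ ≤ β * ‖y‖ := fun y => by simpa [hp] using hg (0, y)
  refine ⟨(g ∘ₗ LinearMap.inl 𝕜 E F).mkContinuous α hgE,
    (g ∘ₗ LinearMap.inr 𝕜 E F).mkContinuous β hgF, ?_,
    LinearMap.mkContinuous_norm_le _ α.2 _, LinearMap.mkContinuous_norm_le _ β.2 _⟩
  ext x
  have hx : χ x = g (x, i x) := (hgχ ⟨(x, i x), x, rfl⟩).symm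
  rw [hx, ← Prod.fst_add_snd (x, i x), map_add]
  rfl

theorem StrongDual.norm_bidual_apply_le_of_norm_le (i : E →L[𝕜] F)
    (H : StrongDual 𝕜 (StrongDual 𝕜 E)) (χ : StrongDual 𝕜 E) {α β : ℝ} (hα : 0 ≤ α)
    (hβ : 0 ≤ β) (hχ : ∀ x, ‖χ x‖ ≤ α * ‖x‖ + β * ‖i x‖) :
    ‖H χ‖ ≤ α * ‖H‖ + β * ‖H.comp ((compL 𝕜 E F 𝕜).flip i)‖ := by
  obtain ⟨χ₁, ξ, rfl, hχ₁, hξ⟩ :=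
    StrongDual.exists_eq_add_comp_of_norm_le i χ ⟨α, hα⟩ ⟨β, hβ⟩ hχ
  calc ‖H (χ₁ + ξ.comp i)‖ = ‖H χ₁ + H.comp ((compL 𝕜 E F 𝕜).flip i) ξ‖ := by
        rw [map_add]; rfl
    _ ≤ ‖H‖ * ‖χ₁‖ + ‖H.comp ((compL 𝕜 E F 𝕜).flip i)‖ * ‖ξ‖ :=
        norm_add_le_of_le (H.le_opNorm _) (le_opNorm _ _)
    _ ≤ α * ‖H‖ + β * ‖H.comp ((compL 𝕜 E F 𝕜).flip i)‖ := by
        rw [mul_comm α, mul_comm β]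
        gcongr
        exacts [hχ₁, hξ]

variable {A B : Type*} [NormedRing A] [NormedAlgebra 𝕜 A] [NormedAddCommGroup B]
  [NormedSpace 𝕜 B] (i : A →L[𝕜] B) {D : ℝ}

theorem norm_arensLeft_apply_le (hD0 : 0 ≤ D)
    (hD : ∀ a b : A, ‖a * b‖ ≤ D * (‖a‖ * ‖i b‖ + ‖i a‖ * ‖b‖))
    (F G : StrongDual 𝕜 (StrongDual 𝕜 A)) (φ : StrongDual 𝕜 A) :
    ‖F (G.comp (((compL 𝕜 A A 𝕜) φ).comp (mul 𝕜 A)))‖ ≤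
      D * (‖F‖ * ‖G.comp ((compL 𝕜 A B 𝕜).flip i)‖
        + ‖F.comp ((compL 𝕜 A B 𝕜).flip i)‖ * ‖G‖) * ‖φ‖ := by
  set T := ((compL 𝕜 A A 𝕜) φ).comp (mul 𝕜 A)
  have hT : ∀ b a, ‖T b a‖ ≤ D * ‖φ‖ * ‖i b‖ * ‖a‖ + D * ‖φ‖ * ‖b‖ * ‖i a‖ := fun b a =>
    calc ‖φ (b * a)‖ ≤ ‖φ‖ * (D * (‖b‖ * ‖i a‖ + ‖i b‖ * ‖a‖)) :=
          (φ.le_opNorm _).trans (by gcongr; exact hD b a)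
      _ = _ := by ring
  have hGT : ∀ b, ‖G.comp T b‖ ≤ D * ‖φ‖ * ‖G.comp ((compL 𝕜 A B 𝕜).flip i)‖ * ‖b‖
      + D * ‖φ‖ * ‖G‖ * ‖i b‖ := fun b =>
    (StrongDual.norm_bidual_apply_le_of_norm_le i G (T b) (by positivity) (by positivity)
      (hT b)).trans_eq (by ring)
  exact (StrongDual.norm_bidual_apply_le_of_norm_le i F (G.comp T) (by positivity)
    (by positivity) hGT).trans_eq (by ring)

theorem map_eq_zero_of_norm_mul_le_of_neg (hD0 : D < 0)
    (hD : ∀ a b : A, ‖a * b‖ ≤ D * (‖a‖ * ‖i b‖ + ‖i a‖ * ‖b‖)) (a : A) : i a = 0 := by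
  have h := (norm_nonneg (a * a)).trans (hD a a)
  have : ‖a‖ * ‖i a‖ ≤ 0 := by nlinarith [mul_nonneg (norm_nonneg a) (norm_nonneg (i a))]
  rcases eq_or_ne a 0 with rfl | ha
  · exact map_zero i
  · exact norm_le_zero_iff.mp (nonpos_of_mul_nonpos_right this (norm_pos_iff.mpr ha))

end

theorem stmt_13_general {A B : Type*} [NormedRing A] [NormedAlgebra ℂ A]
    [NormedRing B] [NormedAlgebra ℂ B]
    (i : A →L[ℂ] B)
    (D : ℝ) (hD : ∀ a b : A, ‖a * b‖ ≤ D * (‖a‖ * ‖i b‖ + ‖i a‖ * ‖b‖))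
    (m : StrongDual ℂ (StrongDual ℂ A) → StrongDual ℂ (StrongDual ℂ A) → StrongDual ℂ (StrongDual ℂ A))
    (hm : ∀ (F G : StrongDual ℂ (StrongDual ℂ A)) (φ : StrongDual ℂ A),
      m F G φ = F (G.comp (((compL ℂ A A ℂ) φ).comp (mul ℂ A)))) :
    ∀ F G : StrongDual ℂ (StrongDual ℂ A),
      ‖m F G‖ ≤ D * (‖F‖ * ‖G.comp ((compL ℂ A B ℂ).flip i)‖
        + ‖F.comp ((compL ℂ A B ℂ).flip i)‖ * ‖G‖) := by
  intro F G
  rcases lt_or_ge D 0 with hD0 | hD0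
  · have hi := map_eq_zero_of_norm_mul_le_of_neg i hD0 hD
    have hmul : mul ℂ A = 0 := by
      ext a b
      exact norm_le_zero_iff.mp (by simpa [hi] using hD a b)
    have hi' : (compL ℂ A B ℂ).flip i = 0 := by ext ξ a; simp [hi]
    have hm0 : m F G = 0 := by ext φ; simp [hm, hmul]
    rw [hm0, hi']
    simp only [comp_zero, norm_zero, mul_zero, zero_mul, add_zero]
    exact (norm_zero (E := StrongDual ℂ (StrongDual ℂ A))).le
  · refine opNorm_le_bound _ (by positivity) fun φ => ?_
    rw [hm]
    exact norm_arensLeft_apply_le i hD0 hD F G φ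

/-- The differential inequality passes to second adjoints with the left Arens product.
Here `m` is the left (first) Arens product on `A** = Dual ℂ (Dual ℂ A)`, characterised by
`(F □ G)(φ) = F(G ∘ φ)` where `(G ∘ φ)(a) = G(φ · a)` and `(φ · a)(b) = φ(ab)`, and
`i** F = F ∘ i*` where `i* φ = φ ∘ i`. -/
theorem stmt_13 {A B : Type*} [NormedRing A] [NormedAlgebra ℂ A]
    [NormedRing B] [NormedAlgebra ℂ B]
    (i : A →L[ℂ] B) (himul : ∀ a b : A, i (a * b) = i a * i b)
    (D : ℝ) (hD : ∀ a b : A, ‖a * b‖ ≤ D * (‖a‖ * ‖i b‖ + ‖i a‖ * ‖b‖))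
    (m : StrongDual ℂ (StrongDual ℂ A) → StrongDual ℂ (StrongDual ℂ A) → StrongDual ℂ (StrongDual ℂ A))
    (hm : ∀ (F G : StrongDual ℂ (StrongDual ℂ A)) (φ : StrongDual ℂ A),
      m F G φ = F (G.comp (((compL ℂ A A ℂ) φ).comp (mul ℂ A)))) :
    ∀ F G : StrongDual ℂ (StrongDual ℂ A),
      ‖m F G‖ ≤ D * (‖F‖ * ‖G.comp ((compL ℂ A B ℂ).flip i)‖
        + ‖F.comp ((compL ℂ A B ℂ).flip i)‖ * ‖G‖) :=
  stmt_13_general i D hD m hm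
end

section
/- Let H be an abelian group containing an element g of infinite order, and let 𝒰 be a non-principal ultrafilter on ℕ. Then the ultrapower H^𝒰 contains a ℤ-linearly independent family of cardinality continuum; in particular the free abelian group of rank continuum ℤ^(ℝ) embeds into H^𝒰. -/
/-!
Choose reals `x r`, `r : ℝ`, that are linearly independent over `ℚ` (a Hamel basis has
cardinality continuum) and represent the `r`-th element by the sequence `n ↦ g ^ ⌊x r * 2 ^ n⌋`.
A nontrivial integer combination `∑ c r • ⌊x r * 2 ^ n⌋` differs from `2 ^ n * ∑ c r * x r`
by at most `∑ |c r|`, while `∑ c r * x r ≠ 0`; so it vanishes for only finitely many `n`,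
and a finite set is not in a non-principal ultrafilter. Since `g` has infinite order, the
corresponding product of powers of `g` is `1` only where the integer combination vanishes.
-/

open Filter

theorem exists_linearIndependent_int_real : ∃ x : ℝ → ℝ, LinearIndependent ℤ x := by
  obtain ⟨s, hs, hli⟩ := (le_rank_iff_exists_linearIndependent (K := ℚ) (V := ℝ)).mp
    (Real.rank_rat_real.trans Cardinal.mk_real.symm).ge
  obtain ⟨e⟩ : Nonempty (ℝ ≃ s) := Cardinal.eq.mp hs.symm
  exact ⟨_, (hli.comp e e.injective).restrict_scalars' ℤ⟩

theorem Finset.prod_zpow_eq_zpow_sum {ι G : Type*} [CommGroup G] (s : Finset ι) (f : ι → ℤ)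
    (g : G) : ∏ i ∈ s, g ^ f i = g ^ ∑ i ∈ s, f i := by
  induction s using Finset.cons_induction <;> simp_all [zpow_add]

theorem abs_mul_sum_sub_sum_floor_le {ι K : Type*} [CommRing K] [LinearOrder K]
    [IsStrictOrderedRing K] [FloorRing K] (s : Finset ι) (c : ι → ℤ) (x : ι → K) (t : K) :
    |t * ∑ i ∈ s, c i * x i - ((∑ i ∈ s, c i * ⌊x i * t⌋ : ℤ) : K)| ≤ ∑ i ∈ s, |(c i : K)| := by
  have herr : t * ∑ i ∈ s, c i * x i - ((∑ i ∈ s, c i * ⌊x i * t⌋ : ℤ) : K)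
      = ∑ i ∈ s, (c i : K) * Int.fract (x i * t) := by
    push_cast
    rw [Finset.mul_sum, ← Finset.sum_sub_distrib]
    exact Finset.sum_congr rfl fun i _ => by rw [Int.fract]; ring
  rw [herr]
  refine (Finset.abs_sum_le_sum_abs _ _).trans (Finset.sum_le_sum fun i _ => ?_)
  rw [abs_mul, abs_of_nonneg (Int.fract_nonneg (x i * t))]
  exact mul_le_of_le_one_right (abs_nonneg _) (Int.fract_lt_one _).le

theorem eventually_sum_mul_floor_ne_zero {ι K : Type*} [Field K] [LinearOrder K]
    [IsStrictOrderedRing K] [FloorRing K] (s : Finset ι) (c : ι → ℤ) (x : ι → K)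
    (hS : ∑ i ∈ s, c i * x i ≠ 0) : ∀ᶠ t in atTop, ∑ i ∈ s, c i * ⌊x i * t⌋ ≠ 0 := by
  set S := ∑ i ∈ s, c i * x i
  have hSpos : 0 < |S| := abs_pos.mpr hS
  filter_upwards [eventually_gt_atTop ((∑ i ∈ s, |(c i : K)|) / |S|)] with t ht hzero
  have hle := abs_mul_sum_sub_sum_floor_le s c x t
  rw [hzero, Int.cast_zero, sub_zero, abs_mul] at hle
  rw [div_lt_iff₀ hSpos] at ht
  linarith [mul_le_mul_of_nonneg_right (le_abs_self t) hSpos.le]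

theorem Ultrafilter.le_atTop_of_ne_pure {𝒰 : Ultrafilter ℕ} (h𝒰 : ¬ ∃ n : ℕ, 𝒰 = pure n) :
    (𝒰 : Filter ℕ) ≤ atTop :=
  Nat.cofinite_eq_atTop ▸ 𝒰.le_cofinite_or_eq_pure.resolve_right h𝒰

/-- If `H` is an abelian group with an element of infinite order and `𝒰` is a non-principal
ultrafilter on `ℕ`, then the ultrapower `H^𝒰` contains a `ℤ`-linearly independent family of
cardinality continuum (indexed by `ℝ`); in particular `ℤ^(ℝ)` embeds into `H^𝒰`.  Elements
of the ultrapower are encoded by representing sequences; `ℤ`-linear independence of the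
classes of `f r`, `r : ℝ`, means that for every finite set `s` of indices and integer
coefficients `c` not all zero on `s`, the set of coordinates where `∏ r ∈ s, (f r n)^(c r)`
equals `1` is not in `𝒰`. -/
theorem stmt_15 (H : Type*) [CommGroup H] (g : H) (hg : ¬ IsOfFinOrder g)
    (𝒰 : Ultrafilter ℕ) (h𝒰 : ¬ ∃ n : ℕ, 𝒰 = pure n) :
    ∃ f : ℝ → ℕ → H, ∀ (s : Finset ℝ) (c : ℝ → ℤ), (∃ r ∈ s, c r ≠ 0) →
      {n : ℕ | (∏ r ∈ s, (f r n) ^ (c r)) = 1} ∉ 𝒰 := by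
  obtain ⟨x, hx⟩ := exists_linearIndependent_int_real
  refine ⟨fun r n => g ^ ⌊x r * 2 ^ n⌋, fun s c ⟨r₀, hr₀, hc⟩ hmem => ?_⟩
  have hS : ∑ r ∈ s, (c r : ℝ) * x r ≠ 0 := by
    simp_rw [← zsmul_eq_mul]
    exact fun h => hc (linearIndependent_iff'.mp hx s c h r₀ hr₀)
  have hev : ∀ᶠ n in (𝒰 : Filter ℕ), ∑ r ∈ s, c r * ⌊x r * 2 ^ n⌋ ≠ 0 :=
    Ultrafilter.le_atTop_of_ne_pure h𝒰 <| (tendsto_pow_atTop_atTop_of_one_lt one_lt_two).eventually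
      (eventually_sum_mul_floor_ne_zero s c x hS)
  obtain ⟨n, hne, hone⟩ := (hev.and (𝒰.mem_coe.mpr hmem)).exists
  simp only [← zpow_mul', Finset.prod_zpow_eq_zpow_sum] at hone
  exact hg (isOfFinOrder_iff_zpow_eq_one.mpr ⟨_, hne, hone⟩)
end

section
/- Let h₁, h₂ : [a₀,b₀] → ℂ be continuous and jointly non-degenerate (|h₁(t)|² + |h₂(t)|² ≥ η² for all t, η > 0). Then for every ε > 0 there is δ > 0 such that for every continuous d with ‖d‖_∞ ≤ δ there exist continuous z₁, z₂ : [a₀,b₀] → ℂ with |z₁(t)|, |z₂(t)| ≤ ε and h₁(t) z₁(t) + h₂(t) z₂(t) + z₁(t) z₂(t) = d(t) for all t; moreover δ can be chosen depending only on ε and η, not on the interval. -/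
/-!
Look for a solution of the form `zᵢ = conj hᵢ · w` with one scalar unknown `w`. Writing
`S = |h₁|² + |h₂|²` and `C = conj h₁ · conj h₂`, the equation becomes the scalar quadratic
`S w + C w² = d`, with root `w = 2d / (S (1 + √(1 + 4Cd/S²)))`. As `|C| ≤ S / 2` and
`|d| ≤ η² / 2 ≤ S / 2`, the principal square root is only evaluated in the closed right
half-plane, where it is continuous, and `|1 + √·| ≥ 1` gives `|w| ≤ 2|d| / S`. Hence
`|zᵢ| ≤ |hᵢ| · 2|d| / S ≤ 2|d| / η`, which is at most `ε` once `|d| ≤ εη / 2`.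
-/

open ComplexConjugate

namespace Complex

lemma re_sqrt_nonneg (z : ℂ) : 0 ≤ z.sqrt.re := by
  rw [sqrt, cpow_inv_two_re]
  positivity

lemma sqrt_sq (z : ℂ) : z.sqrt ^ 2 = z := cpow_ofNat_inv_pow z 2

lemma one_le_norm_one_add_sqrt (z : ℂ) : 1 ≤ ‖1 + z.sqrt‖ :=
  calc (1 : ℝ) ≤ (1 + z.sqrt).re := by simpa using z.re_sqrt_nonneg
    _ ≤ ‖1 + z.sqrt‖ := re_le_norm _

lemma one_add_sqrt_ne_zero (z : ℂ) : 1 + z.sqrt ≠ 0 :=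
  norm_pos_iff.mp (one_pos.trans_le z.one_le_norm_one_add_sqrt)

end Complex

open Complex

/-- The root of `S * w + C * w ^ 2 = d` that vanishes with `d`: it is
`(-S + √(S ^ 2 + 4 * C * d)) / (2 * C)` with the numerator rationalised, which keeps it
meaningful at `C = 0`. -/
noncomputable def smallQuadraticRoot (S C d : ℂ) : ℂ :=
  2 * d / (S * (1 + sqrt (1 + 4 * C * d / S ^ 2)))

theorem smallQuadraticRoot_spec {S : ℂ} (hS : S ≠ 0) (C d : ℂ) :
    S * smallQuadraticRoot S C d + C * smallQuadraticRoot S C d ^ 2 = d := by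
  have hsq := sqrt_sq (1 + 4 * C * d / S ^ 2)
  have hne := one_add_sqrt_ne_zero (1 + 4 * C * d / S ^ 2)
  rw [smallQuadraticRoot]
  generalize sqrt (1 + 4 * C * d / S ^ 2) = s at hsq hne ⊢
  field_simp at hsq ⊢
  linear_combination -d * hsq

theorem norm_smallQuadraticRoot_le (S C d : ℂ) :
    ‖smallQuadraticRoot S C d‖ ≤ 2 * ‖d‖ / ‖S‖ := by
  rw [smallQuadraticRoot, norm_div, norm_mul, norm_mul, Complex.norm_two, ← div_div]
  exact div_le_self (by positivity) (one_le_norm_one_add_sqrt _)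

theorem ContinuousOn.smallQuadraticRoot {X : Type*} [TopologicalSpace X] {s : Set X}
    {S C d : X → ℂ} (hS : ContinuousOn S s) (hC : ContinuousOn C s) (hd : ContinuousOn d s)
    (hS₀ : ∀ x ∈ s, S x ≠ 0) (hsmall : ∀ x ∈ s, ‖4 * C x * d x / S x ^ 2‖ ≤ 1) :
    ContinuousOn (fun x ↦ _root_.smallQuadraticRoot (S x) (C x) (d x)) s := by
  have hv : ContinuousOn (fun x ↦ 1 + 4 * C x * d x / S x ^ 2) s :=
    continuousOn_const.add <| ((continuousOn_const.mul hC).mul hd).div (hS.pow 2)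
      fun x hx ↦ pow_ne_zero 2 (hS₀ x hx)
  have hsqrt : ContinuousOn (fun x ↦ Complex.sqrt (1 + 4 * C x * d x / S x ^ 2)) s := by
    refine fun x hx ↦ (continuousAt_sqrt (Or.inl ?_)).comp_continuousWithinAt (hv x hx)
    have := (abs_le.mp ((abs_re_le_norm _).trans (hsmall x hx))).1
    simp only [add_re, one_re]
    linarith
  exact (continuousOn_const.mul hd).div (hS.mul (continuousOn_const.add hsqrt))
    fun x hx ↦ mul_ne_zero (hS₀ x hx) (one_add_sqrt_ne_zero _)

theorem conj_ansatz_eq (h₁ h₂ w : ℂ) :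
    h₁ * (conj h₁ * w) + h₂ * (conj h₂ * w) + conj h₁ * w * (conj h₂ * w) =
      ((‖h₁‖ ^ 2 + ‖h₂‖ ^ 2 : ℝ) : ℂ) * w + conj h₁ * conj h₂ * w ^ 2 := by
  push_cast
  rw [← mul_conj', ← mul_conj']
  ring

theorem norm_four_mul_conj_mul_div_le_one {h₁ h₂ d : ℂ}
    (hd : ‖d‖ ≤ (‖h₁‖ ^ 2 + ‖h₂‖ ^ 2) / 2) :
    ‖4 * (conj h₁ * conj h₂) * d / ((‖h₁‖ ^ 2 + ‖h₂‖ ^ 2 : ℝ) : ℂ) ^ 2‖ ≤ 1 := by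
  rw [norm_div, norm_pow, norm_real, Real.norm_of_nonneg (by positivity), norm_mul, norm_mul,
    norm_mul, Complex.norm_conj, Complex.norm_conj, norm_ofNat]
  refine div_le_one_of_le₀ ?_ (by positivity)
  nlinarith [sq_nonneg (‖h₁‖ - ‖h₂‖), norm_nonneg d, norm_nonneg h₁, norm_nonneg h₂,
    mul_nonneg (norm_nonneg d) (sq_nonneg (‖h₁‖ - ‖h₂‖))]

theorem norm_mul_smallQuadraticRoot_le {η ε δ S : ℝ} {g C d : ℂ} (hη : 0 < η)
    (hηS : η ^ 2 ≤ S) (hgS : ‖g‖ ^ 2 ≤ S) (hd : ‖d‖ ≤ δ) (hδ : 2 * δ ≤ ε * η) :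
    ‖g * smallQuadraticRoot S C d‖ ≤ ε := by
  have hS : 0 < S := (pow_pos hη 2).trans_le hηS
  have hε : 0 ≤ ε := nonneg_of_mul_nonneg_left (by linarith [norm_nonneg d]) hη
  have hgη : ‖g‖ * η ≤ S := by nlinarith [sq_nonneg (‖g‖ - η)]
  calc ‖g * smallQuadraticRoot S C d‖ ≤ ‖g‖ * (2 * δ / S) := by
        rw [norm_mul]
        gcongr
        refine (norm_smallQuadraticRoot_le _ _ _).trans ?_
        rw [norm_real, Real.norm_of_nonneg hS.le]
        gcongr
    _ ≤ ‖g‖ * (ε * η / S) := by gcongr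
    _ ≤ ε := by
        rw [← mul_div_assoc, div_le_iff₀ hS]
        nlinarith [mul_le_mul_of_nonneg_left hgη hε]

theorem exists_continuousOn_conj_ansatz_solution {X : Type*} [TopologicalSpace X] {s : Set X}
    {η ε δ : ℝ} (hη : 0 < η) (hδη : δ ≤ η ^ 2 / 2) (hδε : 2 * δ ≤ ε * η)
    {h₁ h₂ d : X → ℂ} (hh₁ : ContinuousOn h₁ s) (hh₂ : ContinuousOn h₂ s)
    (hd : ContinuousOn d s) (hnd : ∀ x ∈ s, η ^ 2 ≤ ‖h₁ x‖ ^ 2 + ‖h₂ x‖ ^ 2)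
    (hdδ : ∀ x ∈ s, ‖d x‖ ≤ δ) :
    ∃ z₁ z₂ : X → ℂ, ContinuousOn z₁ s ∧ ContinuousOn z₂ s ∧
      ∀ x ∈ s, ‖z₁ x‖ ≤ ε ∧ ‖z₂ x‖ ≤ ε ∧ h₁ x * z₁ x + h₂ x * z₂ x + z₁ x * z₂ x = d x := by
  set S : X → ℝ := fun x ↦ ‖h₁ x‖ ^ 2 + ‖h₂ x‖ ^ 2
  set w : X → ℂ := fun x ↦ smallQuadraticRoot (S x) (conj (h₁ x) * conj (h₂ x)) (d x)
  have hS₀ : ∀ x ∈ s, (S x : ℂ) ≠ 0 := fun x hx ↦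
    ofReal_ne_zero.2 ((pow_pos hη 2).trans_le (hnd x hx)).ne'
  have hw : ContinuousOn w s :=
    ContinuousOn.smallQuadraticRoot (by fun_prop) (by fun_prop) hd hS₀ fun x hx ↦
      norm_four_mul_conj_mul_div_le_one (by linarith [hdδ x hx, hnd x hx])
  refine ⟨fun x ↦ conj (h₁ x) * w x, fun x ↦ conj (h₂ x) * w x, by fun_prop, by fun_prop,
    fun x hx ↦ ⟨?_, ?_, ?_⟩⟩
  · exact norm_mul_smallQuadraticRoot_le hη (hnd x hx) (by simp [S]) (hdδ x hx) hδε
  · exact norm_mul_smallQuadraticRoot_le hη (hnd x hx) (by simp [S]) (hdδ x hx) hδε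
  · rw [conj_ansatz_eq]
    exact smallQuadraticRoot_spec (hS₀ x hx) _ _

/-- For jointly `η²`-non-degenerate continuous `h₁, h₂` on a compact interval and any
`ε > 0` there is `δ > 0`, depending only on `ε` and `η` (not on the interval), such that
every continuous perturbation `d` with `‖d‖_∞ ≤ δ` can be realised as
`h₁ z₁ + h₂ z₂ + z₁ z₂` with continuous `z₁, z₂` of modulus at most `ε`. -/
theorem stmt_17 (η ε : ℝ) (hη : 0 < η) (hε : 0 < ε) :
    ∃ δ : ℝ, 0 < δ ∧
      ∀ (a₀ b₀ : ℝ), a₀ < b₀ →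
        ∀ h₁ h₂ : ℝ → ℂ, ContinuousOn h₁ (Set.Icc a₀ b₀) → ContinuousOn h₂ (Set.Icc a₀ b₀) →
          (∀ t ∈ Set.Icc a₀ b₀,
            η ^ 2 ≤ (‖h₁ t‖) ^ 2 + (‖h₂ t‖) ^ 2) →
          ∀ d : ℝ → ℂ, ContinuousOn d (Set.Icc a₀ b₀) →
            (∀ t ∈ Set.Icc a₀ b₀, ‖d t‖ ≤ δ) →
            ∃ z₁ z₂ : ℝ → ℂ, ContinuousOn z₁ (Set.Icc a₀ b₀) ∧
              ContinuousOn z₂ (Set.Icc a₀ b₀) ∧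
              (∀ t ∈ Set.Icc a₀ b₀, ‖z₁ t‖ ≤ ε ∧ ‖z₂ t‖ ≤ ε ∧
                h₁ t * z₁ t + h₂ t * z₂ t + z₁ t * z₂ t = d t) :=
  ⟨min (η ^ 2 / 2) (ε * η / 2), by positivity, fun _ _ _ _ _ hh₁ hh₂ hnd _ hd hdδ ↦
    exists_continuousOn_conj_ansatz_solution hη (min_le_left _ _)
      (by linarith [min_le_right (η ^ 2 / 2) (ε * η / 2)]) hh₁ hh₂ hd hnd hdδ⟩
end

section
/- Let f : [a₀,b₀] → ℂ be continuous with |f(t)| ≥ η for all t and g : [a₀,b₀] → ℂ continuous with |g(t)| = 1 for all t. Then for every ε > 0 there exists δ > 0 such that for every continuous d with ‖d‖_∞ ≤ δ there is a continuous φ : [a₀,b₀] → ℂ with ‖φ‖_∞ ≤ ε and f(t) φ(t) + g(t) φ(t)² = d(t) for all t. -/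
/-!
Pointwise this is the quadratic formula: with `w = 4 g d / f²`, the root
`φ = f (√(1 + w) - 1) / (2 g)` of `f φ + g φ² = d` taken with the principal square root
satisfies `|√(1 + w) - 1| ≤ |w|`, because `(√(1 + w) - 1)(√(1 + w) + 1) = w` and
`|√(1 + w) + 1| ≥ 1` (the principal root has nonnegative real part). Hence `|φ| ≤ 2 |d| / |f|`,
and `φ` is continuous as long as `1 + w` stays off the branch cut, i.e. for `|d| < η² / 4`.
-/

open Complex

/-- The root of `a x + b x² = c` given by the quadratic formula with the principal square root;
it is the small root when `c` is small compared with `a`. -/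
noncomputable def quadRoot (a b c : ℂ) : ℂ :=
  a * ((1 + 4 * b * c / a ^ 2) ^ (2⁻¹ : ℂ) - 1) / (2 * b)

lemma norm_one_add_cpow_inv_two_sub_one_le (w : ℂ) : ‖(1 + w) ^ (2⁻¹ : ℂ) - 1‖ ≤ ‖w‖ := by
  set s := (1 + w) ^ (2⁻¹ : ℂ)
  have hfactor : (s - 1) * (s + 1) = w := by
    linear_combination cpow_ofNat_inv_pow (1 + w) 2
  have hs_re : 0 ≤ s.re := by rw [cpow_inv_two_re]; exact Real.sqrt_nonneg _
  have hone_le : 1 ≤ ‖s + 1‖ := by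
    calc (1 : ℝ) ≤ (s + 1).re := by simpa using hs_re
      _ ≤ ‖s + 1‖ := re_le_norm _
  calc ‖s - 1‖ ≤ ‖s - 1‖ * ‖s + 1‖ := le_mul_of_one_le_right (norm_nonneg _) hone_le
    _ = ‖w‖ := by rw [← norm_mul, hfactor]

lemma quadRoot_spec {a b : ℂ} (ha : a ≠ 0) (hb : b ≠ 0) (c : ℂ) :
    a * quadRoot a b c + b * quadRoot a b c ^ 2 = c := by
  have hsq : ((1 + 4 * b * c / a ^ 2) ^ (2⁻¹ : ℂ)) ^ 2 = 1 + 4 * b * c / a ^ 2 :=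
    cpow_ofNat_inv_pow _ 2
  unfold quadRoot
  generalize (1 + 4 * b * c / a ^ 2) ^ (2⁻¹ : ℂ) = s at hsq ⊢
  field_simp at hsq ⊢
  linear_combination hsq

lemma norm_quadRoot_le (a b c : ℂ) : ‖quadRoot a b c‖ ≤ 2 * ‖c‖ / ‖a‖ := by
  rcases eq_or_ne a 0 with rfl | ha
  · simp [quadRoot]
  rcases eq_or_ne b 0 with rfl | hb
  · simp only [quadRoot, mul_zero, div_zero, norm_zero]
    positivity
  have hroot := norm_one_add_cpow_inv_two_sub_one_le (4 * b * c / a ^ 2)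
  calc ‖quadRoot a b c‖
      = ‖a‖ * ‖(1 + 4 * b * c / a ^ 2) ^ (2⁻¹ : ℂ) - 1‖ / (2 * ‖b‖) := by
        simp [quadRoot]
    _ ≤ ‖a‖ * ‖4 * b * c / a ^ 2‖ / (2 * ‖b‖) := by gcongr
    _ = 2 * ‖c‖ / ‖a‖ := by
        simp only [norm_div, norm_mul, norm_pow, RCLike.norm_ofNat]
        field_simp
        ring

lemma ContinuousOn.quadRoot {s : Set ℝ} {f g d : ℝ → ℂ} (hf : ContinuousOn f s)
    (hg : ContinuousOn g s) (hd : ContinuousOn d s) (hf0 : ∀ t ∈ s, f t ≠ 0)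
    (hg0 : ∀ t ∈ s, g t ≠ 0) (hslit : ∀ t ∈ s, 1 + 4 * g t * d t / f t ^ 2 ∈ slitPlane) :
    ContinuousOn (fun t => quadRoot (f t) (g t) (d t)) s := by
  have hw : ContinuousOn (fun t => 4 * g t * d t / f t ^ 2) s :=
    ((continuousOn_const.mul hg).mul hd).div (hf.pow 2) fun t ht => pow_ne_zero 2 (hf0 t ht)
  have hsqrt := (continuousOn_const.add hw).cpow_const (b := 2⁻¹) hslit
  exact (hf.mul (hsqrt.sub continuousOn_const)).div (continuousOn_const.mul hg)
    fun t ht => mul_ne_zero two_ne_zero (hg0 t ht)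

theorem stmt_18_general (a₀ b₀ : ℝ) (η : ℝ) (hη : 0 < η) (f g : ℝ → ℂ)
    (hfc : ContinuousOn f (Set.Icc a₀ b₀)) (hgc : ContinuousOn g (Set.Icc a₀ b₀))
    (hf : ∀ t ∈ Set.Icc a₀ b₀, η ≤ ‖f t‖)
    (hg : ∀ t ∈ Set.Icc a₀ b₀, ‖g t‖ = 1) :
    ∀ ε : ℝ, 0 < ε → ∃ δ : ℝ, 0 < δ ∧
      ∀ d : ℝ → ℂ, ContinuousOn d (Set.Icc a₀ b₀) →
        (∀ t ∈ Set.Icc a₀ b₀, ‖d t‖ ≤ δ) →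
        ∃ φ : ℝ → ℂ, ContinuousOn φ (Set.Icc a₀ b₀) ∧
          (∀ t ∈ Set.Icc a₀ b₀, ‖φ t‖ ≤ ε) ∧
          (∀ t ∈ Set.Icc a₀ b₀, f t * φ t + g t * (φ t) ^ 2 = d t) := by
  intro ε hε
  refine ⟨min (ε * η / 2) (η ^ 2 / 8), by positivity, fun d hdc hd => ?_⟩
  have hf_pos : ∀ t ∈ Set.Icc a₀ b₀, 0 < ‖f t‖ := fun t ht => hη.trans_le (hf t ht)
  have hf0 : ∀ t ∈ Set.Icc a₀ b₀, f t ≠ 0 := fun t ht => norm_pos_iff.mp (hf_pos t ht)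
  have hg0 : ∀ t ∈ Set.Icc a₀ b₀, g t ≠ 0 := fun t ht => norm_ne_zero_iff.mp (by simp [hg t ht])
  have hslit : ∀ t ∈ Set.Icc a₀ b₀, 1 + 4 * g t * d t / f t ^ 2 ∈ slitPlane := by
    intro t ht
    refine mem_slitPlane_of_norm_lt_one ?_
    have hdt : ‖d t‖ ≤ η ^ 2 / 8 := (hd t ht).trans (min_le_right _ _)
    have hη_le : η ^ 2 ≤ ‖f t‖ ^ 2 := pow_le_pow_left₀ hη.le (hf t ht) 2
    rw [norm_div, norm_mul, norm_mul, norm_pow, hg t ht, div_lt_one (pow_pos (hf_pos t ht) 2)]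
    norm_num
    linarith [pow_pos hη 2]
  refine ⟨fun t => quadRoot (f t) (g t) (d t), hfc.quadRoot hgc hdc hf0 hg0 hslit,
    fun t ht => ?_, fun t ht => quadRoot_spec (hf0 t ht) (hg0 t ht) (d t)⟩
  have hdt : ‖d t‖ ≤ ε * η / 2 := (hd t ht).trans (min_le_left _ _)
  calc ‖quadRoot (f t) (g t) (d t)‖ ≤ 2 * ‖d t‖ / ‖f t‖ := norm_quadRoot_le _ _ _
    _ ≤ 2 * (ε * η / 2) / η := by gcongr; exact hf t ht
    _ = ε := by field_simp

/-- If `|f| ≥ η > 0` and `|g| = 1` on `[a₀,b₀]`, then for every `ε > 0` there is `δ > 0`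
such that every continuous `d` with `‖d‖_∞ ≤ δ` can be written as `f φ + g φ²` for some
continuous `φ` with `‖φ‖_∞ ≤ ε`. -/
theorem stmt_18 (a₀ b₀ : ℝ) (hab : a₀ < b₀) (η : ℝ) (hη : 0 < η) (f g : ℝ → ℂ)
    (hfc : ContinuousOn f (Set.Icc a₀ b₀)) (hgc : ContinuousOn g (Set.Icc a₀ b₀))
    (hf : ∀ t ∈ Set.Icc a₀ b₀, η ≤ ‖f t‖)
    (hg : ∀ t ∈ Set.Icc a₀ b₀, ‖g t‖ = 1) :
    ∀ ε : ℝ, 0 < ε → ∃ δ : ℝ, 0 < δ ∧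
      ∀ d : ℝ → ℂ, ContinuousOn d (Set.Icc a₀ b₀) →
        (∀ t ∈ Set.Icc a₀ b₀, ‖d t‖ ≤ δ) →
        ∃ φ : ℝ → ℂ, ContinuousOn φ (Set.Icc a₀ b₀) ∧
          (∀ t ∈ Set.Icc a₀ b₀, ‖φ t‖ ≤ ε) ∧
          (∀ t ∈ Set.Icc a₀ b₀, f t * φ t + g t * (φ t) ^ 2 = d t) :=
  stmt_18_general a₀ b₀ η hη f g hfc hgc hf hg
end

section
/- Let X be a compact Hausdorff space and suppose the multiplication on C(X, ℂ) is an open map. Then invertible elements are dense in C(X, ℂ); equivalently, C(X) has topological stable rank 1. -/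
/-- If multiplication on `C(X, ℂ)` (for `X` compact Hausdorff) is an open map, then the
invertible elements are dense in `C(X, ℂ)`, i.e. `C(X)` has topological stable rank 1. -/
theorem stmt_19 (X : Type*) [TopologicalSpace X] [CompactSpace X] [T2Space X]
    (hopen : IsOpenMap fun p : C(X, ℂ) × C(X, ℂ) => p.1 * p.2) :
    Dense {f : C(X, ℂ) | IsUnit f} := by
  rw [Metric.dense_iff]
  intro f r hr
  -- the image of `ball f r × ball 0 1` under multiplication is open and contains `0 = f * 0`
  set V : Set C(X, ℂ) :=
    (fun p : C(X, ℂ) × C(X, ℂ) => p.1 * p.2) '' (Metric.ball f r ×ˢ Metric.ball 0 1) with hV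
  have hVopen : IsOpen V := hopen _ (Metric.isOpen_ball.prod Metric.isOpen_ball)
  have h0 : (0 : C(X, ℂ)) ∈ V :=
    ⟨(f, 0), ⟨Metric.mem_ball_self hr, Metric.mem_ball_self one_pos⟩, mul_zero f⟩
  obtain ⟨δ, hδ, hball⟩ := Metric.isOpen_iff.mp hVopen 0 h0
  -- the constant function `c = (δ/2) • 1` lies in `V` and is a unit
  set c : C(X, ℂ) := algebraMap ℂ C(X, ℂ) ((δ / 2 : ℝ) : ℂ) with hc
  have hcu : IsUnit c :=
    (isUnit_iff_ne_zero.mpr (Complex.ofReal_ne_zero.mpr (by positivity))).map (algebraMap ℂ C(X, ℂ))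
  have hcV : c ∈ V := by
    apply hball
    rw [Metric.mem_ball, dist_zero_right]
    have : ‖c‖ ≤ δ / 2 := by
      refine (ContinuousMap.norm_le _ (by positivity)).mpr fun x => ?_
      simp [hc, abs_of_pos hδ]
    linarith
  obtain ⟨⟨g, h⟩, ⟨hg, -⟩, hgh⟩ := hcV
  exact ⟨g, hg, isUnit_of_mul_isUnit_left (hgh ▸ hcu)⟩
end
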